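/- In the Milnor K-theory ring of a field F, for any a_1, ..., a_n ∈ F^* with a_1 + ... + a_n = 0 (n ≥ 2), the symbol {a_1, ..., a_n} is zero. -/
import Mathlib


/-!
Milnor K-theory of a field `F`: the quotient of the tensor algebra (over `ℤ`)
on the abelian group `Fˣ` (written additively) by the two-sided ideal generated
by the Steinberg elements `a ⊗ b` with `a + b = 1`.
-/

open TensorAlgebra

/-- The Steinberg relation defining Milnor K-theory. -/
inductive MilnorRel (F : Type*) [Field F] :
    TensorAlgebra ℤ (Additive Fˣ) → TensorAlgebra ℤ (Additive Fˣ) → Prop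
  | steinberg (a b : Fˣ) (h : (a : F) + (b : F) = 1) :
      MilnorRel F (ι ℤ (Additive.ofMul a) * ι ℤ (Additive.ofMul b)) 0

/-- The (total) Milnor K-theory ring `K^M_*(F)`. -/
abbrev MilnorK (F : Type*) [Field F] := RingQuot (MilnorRel F)

/-- The symbol `{a}` in `K^M_1(F)`. -/
noncomputable def MilnorK.symbol {F : Type*} [Field F] (a : Fˣ) : MilnorK F :=
  RingQuot.mkRingHom (MilnorRel F) (ι ℤ (Additive.ofMul a))

section RingAux

variable {R : Type*} [Ring R]

private lemma ring_aux0 (x u v : R) (h1 : x * u = 0) (h2 : x * v = 0) :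
    x * (u + -v) = 0 := by
  rw [mul_add, mul_neg, h1, h2, neg_zero, add_zero]

private lemma ring_negmul (x y : R) (h : -x * y = 0) : x * y = 0 := by
  rwa [neg_mul, neg_eq_zero] at h

private lemma ring_aux1 (x y z w : R)
    (h1 : (x + -z) * (y + -z) = 0) (hC : z * (w + z) = 0) (hac : x * z = -(z * x)) :
    x * y = z * (w + (y + -x)) := by
  linear_combination (norm := skip) h1 - hC + hac
  simp only [mul_add, add_mul, mul_neg, neg_mul, neg_neg, neg_add]
  abel

private lemma ring_aux2 (x y w : R)
    (h0 : (x + y) * (w + (x + y)) = 0) (hA : x * (w + x) = 0) (hB : y * (w + y) = 0) :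
    x * y = -(y * x) := by
  linear_combination (norm := skip) h0 - hA - hB
  simp only [mul_add, add_mul, mul_neg, neg_mul, neg_neg, neg_add]
  abel

private lemma ring_aux3 (p q c x r : R)
    (h1 : p * q = c * x) (h2 : c * x = -(x * c)) (h3 : c * r = 0) :
    p * (q * r) = 0 := by
  calc p * (q * r) = (p * q) * r := by rw [mul_assoc]
    _ = (c * x) * r := by rw [h1]
    _ = -(x * c) * r := by rw [h2]
    _ = -(x * (c * r)) := by rw [neg_mul, mul_assoc]
    _ = 0 := by rw [h3, mul_zero, neg_zero]

private lemma ring_aux4 (p q r : R) (h : p * q = 0) : p * (q * r) = 0 := by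
  rw [← mul_assoc, h, zero_mul]

end RingAux

namespace MilnorK

variable {F : Type*} [Field F]

lemma symbol_mul (a b : Fˣ) : symbol (a * b) = symbol a + (symbol b : MilnorK F) := by
  unfold symbol
  rw [show Additive.ofMul (a * b) = Additive.ofMul a + Additive.ofMul b from rfl,
    map_add, map_add]

lemma symbol_one : symbol (1 : Fˣ) = (0 : MilnorK F) := by
  unfold symbol
  rw [show Additive.ofMul (1 : Fˣ) = (0 : Additive Fˣ) from rfl, map_zero, map_zero]

lemma symbol_inv (a : Fˣ) : symbol a⁻¹ = -(symbol a : MilnorK F) := by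
  have h := symbol_mul a a⁻¹
  rw [mul_inv_cancel, symbol_one] at h
  exact eq_neg_of_add_eq_zero_right h.symm

lemma steinberg' {a b : Fˣ} (h : (a : F) + (b : F) = 1) :
    symbol a * symbol b = (0 : MilnorK F) := by
  unfold symbol
  rw [← map_mul, RingQuot.mkRingHom_rel (MilnorRel.steinberg a b h), map_zero]

lemma symbol_neg (a : Fˣ) : symbol (-a) = symbol (-1 : Fˣ) + (symbol a : MilnorK F) := by
  rw [← symbol_mul, neg_one_mul]

lemma symbol_mul_symbol_neg (a : Fˣ) : symbol a * symbol (-a) = (0 : MilnorK F) := by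
  by_cases ha : a = 1
  · subst ha; rw [symbol_one, zero_mul]
  · have haF : (a : F) ≠ 1 := fun h => ha (Units.ext (by rw [Units.val_one]; exact h))
    have ha0 : (a : F) ≠ 0 := Units.ne_zero a
    have h1 : (1 : F) - (a : F) ≠ 0 := sub_ne_zero.mpr (Ne.symm haF)
    have h2 : (1 : F) - ((a⁻¹ : Fˣ) : F) ≠ 0 := by
      rw [Units.val_inv_eq_inv_val, sub_ne_zero]
      intro h
      apply haF
      field_simp at h
      first | exact h | exact h.symm | exact Units.val_eq_one.mpr h
    set u : Fˣ := Units.mk0 _ h1 with hu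
    set v : Fˣ := Units.mk0 _ h2 with hv
    have hsu : symbol a * symbol u = (0 : MilnorK F) := by
      apply steinberg'
      rw [hu, Units.val_mk0]; ring
    have hsv : symbol a * symbol v = (0 : MilnorK F) := by
      have h' : symbol a⁻¹ * symbol v = (0 : MilnorK F) := by
        apply steinberg'
        rw [hv, Units.val_mk0]; ring
      rw [symbol_inv] at h'
      exact ring_negmul _ _ h'
    have huv' : (-a) * v = u := by
      ext
      rw [Units.val_mul, Units.val_neg]
      rw [hu, hv]
      rw [Units.val_mk0, Units.val_mk0, Units.val_inv_eq_inv_val]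
      field_simp
      ring
    have huv : -a = u * v⁻¹ := by rw [← huv', mul_inv_cancel_right]
    rw [huv, symbol_mul, symbol_inv]
    exact ring_aux0 _ _ _ hsu hsv

lemma symbol_anticomm (a b : Fˣ) :
    symbol a * symbol b = -(symbol b * symbol a : MilnorK F) := by
  have h0 := symbol_mul_symbol_neg (a * b)
  rw [symbol_neg, symbol_mul] at h0
  have hA := symbol_mul_symbol_neg a
  rw [symbol_neg] at hA
  have hB := symbol_mul_symbol_neg b
  rw [symbol_neg] at hB
  exact ring_aux2 _ _ _ h0 hA hB

/-- Key identity: if `a + b = c` then `{a, b} = {c, -b/a}`. -/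
lemma symbol_key {a b c : Fˣ} (h : (a : F) + (b : F) = (c : F)) :
    symbol a * symbol b = symbol c * symbol (-(b * a⁻¹)) := by
  have h1 : symbol (a * c⁻¹) * symbol (b * c⁻¹) = (0 : MilnorK F) := by
    apply steinberg'
    have hc : (c : F) ≠ 0 := Units.ne_zero c
    simp only [Units.val_mul, Units.val_inv_eq_inv_val]
    rw [← add_mul, h, mul_inv_cancel₀ hc]
  rw [symbol_mul, symbol_mul, symbol_inv] at h1
  have hC := symbol_mul_symbol_neg c
  rw [symbol_neg] at hC
  have hac := symbol_anticomm a c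
  rw [symbol_neg, symbol_mul, symbol_inv]
  exact ring_aux1 _ _ _ _ h1 hC hac

end MilnorK

private lemma milnor_map_coe_eq (F : Type*) [Field F] (l : List Fˣ) :
    (l.map (fun a => (a : F))) = List.map Units.val l := by
  induction l with
  | nil => rfl
  | cons a t ih =>
    simp only [List.map_cons]
    simp at ih ⊢
    simp [ih]

open MilnorK in
private lemma milnor_aux (F : Type*) [Field F] (t : List Fˣ) : ∀ a b : Fˣ,
    (a : F) + (b : F) + (List.map Units.val t).sum = 0 →
    symbol a * (symbol b * (t.map (fun a => MilnorK.symbol a)).prod) = (0 : MilnorK F) := by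
  induction t with
  | nil =>
    intro a b h
    simp only [List.map_nil, List.sum_nil, add_zero] at h
    have hb : b = -a := Units.ext (by rw [Units.val_neg]; linear_combination h)
    rw [hb, List.map_nil, List.prod_nil]
    simpa using symbol_mul_symbol_neg a
  | cons d t ih =>
    intro a b h
    simp only [List.map_cons, List.sum_cons] at h
    by_cases hc : (a : F) + (b : F) = 0
    · have hb : b = -a := Units.ext (by rw [Units.val_neg]; linear_combination hc)
      rw [hb]
      exact ring_aux4 _ _ _ (symbol_mul_symbol_neg a)
    · set c : Fˣ := Units.mk0 _ hc with hcdef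
      have hkey : symbol a * symbol b = symbol c * symbol (-(b * a⁻¹)) :=
        symbol_key (by rw [hcdef, Units.val_mk0])
      have hih : symbol c * (symbol d * (t.map (fun a => MilnorK.symbol a)).prod)
          = (0 : MilnorK F) := by
        apply ih
        rw [hcdef, Units.val_mk0]
        linear_combination h
      rw [List.map_cons, List.prod_cons]
      exact ring_aux3 _ _ _ _ _ hkey (symbol_anticomm c (-(b * a⁻¹))) hih

/-- If `a₁, …, aₙ ∈ Fˣ` (with `n ≥ 2`) satisfy `a₁ + ⋯ + aₙ = 0` in `F`, then the
symbol `{a₁, …, aₙ}` vanishes in Milnor K-theory. -/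
theorem milnor_symbol_of_sum_eq_zero (F : Type*) [Field F] (l : List Fˣ)
    (hlen : 2 ≤ l.length) (hsum : (l.map (fun a => (a : F))).sum = 0) :
    (l.map (fun a => MilnorK.symbol a)).prod = (0 : MilnorK F) := by
  rw [milnor_map_coe_eq] at hsum
  match l, hlen, hsum with
  | a :: b :: t, _, hsum =>
    simp only [List.map_cons, List.sum_cons] at hsum
    simp only [List.map_cons, List.prod_cons]
    exact milnor_aux F t a b (by linear_combination hsum)
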